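/- Combining well-representation with an average error bound: suppose μ is a distribution on a finite set of distributions on X × {0,1} such that for every D in the support of μ there exists D' with μ(D') ≥ p_l and |err_D(h) − err_{D'}(h)| ≤ δ for all h in a class H. Let D₁, …, D_k be i.i.d. from μ, and suppose that (a) every atom D' with μ(D') ≥ p_l appears at least k·p_l/2 times among D₁, …, D_k, and (b) (1/k)∑_{i=1}^k err_{D_i}(h) ≤ β for some h ∈ H. Then for every D in the support of μ, err_D(h) ≤ (2/p_l)·β + δ. -/

import Mathlib

open MeasureTheory
open scoped ENNReal

open Finset in
theorem Finset.card_filter_eq_mul_le_sum {ι α : Type*} [DecidableEq α] (s : Finset ι)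
    (D : ι → α) (g : α → ℝ) (hg : ∀ i ∈ s, 0 ≤ g (D i)) (a : α) :
    (#{i ∈ s | D i = a} : ℝ) * g a ≤ ∑ i ∈ s, g (D i) :=
  calc (#{i ∈ s | D i = a} : ℝ) * g a = ∑ i ∈ s with D i = a, g (D i) := by
        rw [sum_congr rfl fun i hi => by rw [(mem_filter.mp hi).2], sum_const, nsmul_eq_mul]
    _ ≤ ∑ i ∈ s, g (D i) :=
        sum_le_sum_of_subset_of_nonneg (filter_subset _ s) fun i hi _ => hg i hi

theorem le_two_div_mul_of_average_le_of_frequent {α : Type*} [DecidableEq α] {k : ℕ}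
    (hk : 0 < k) (D : Fin k → α) (g : α → ℝ) (hg : ∀ x, 0 ≤ g x) {p β : ℝ} (hp : 0 < p)
    (a : α) (hcount : (k : ℝ) * p / 2 ≤ ((Finset.univ.filter (fun i => D i = a)).card : ℝ))
    (havg : (1 / k : ℝ) * ∑ i, g (D i) ≤ β) :
    g a ≤ 2 / p * β := by
  have hk' : (0 : ℝ) < k := by exact_mod_cast hk
  have hsum : ∑ i, g (D i) ≤ k * β := by
    rwa [one_div, inv_mul_le_iff₀ hk'] at havg
  have hscaled : k * (p / 2 * g a) ≤ k * β :=
    calc k * (p / 2 * g a) = k * p / 2 * g a := by ring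
      _ ≤ (Finset.univ.filter (fun i => D i = a)).card * g a :=
          mul_le_mul_of_nonneg_right hcount (hg a)
      _ ≤ ∑ i, g (D i) := Finset.card_filter_eq_mul_le_sum _ D g (fun i _ => hg (D i)) a
      _ ≤ k * β := hsum
  have hhalf : p / 2 * g a ≤ β := le_of_mul_le_mul_left hscaled hk'
  rw [div_mul_eq_mul_div, le_div_iff₀ hp]
  linarith

theorem well_representation_error_bound_general {α H : Type*} [MeasurableSpace α]
    [DecidableEq α] (μ : Measure α)
    (err : α → H → ℝ) (herr : ∀ a h, err a h ∈ Set.Icc (0 : ℝ) 1)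
    (p_l δ β : ℝ) (hpl : 0 < p_l)
    {k : ℕ} (hk : 0 < k) (D : Fin k → α)
    (hrep : ∀ a : α, μ {a} ≠ 0 →
      ∃ a' : α, ENNReal.ofReal p_l ≤ μ {a'} ∧ ∀ h : H, |err a h - err a' h| ≤ δ)
    (hcount : ∀ a' : α, ENNReal.ofReal p_l ≤ μ {a'} →
      (k : ℝ) * p_l / 2 ≤ ((Finset.univ.filter (fun i : Fin k => D i = a')).card : ℝ))
    (h : H) (havg : (1 / k : ℝ) * ∑ i, err (D i) h ≤ β) :
    ∀ a : α, μ {a} ≠ 0 → err a h ≤ (2 / p_l) * β + δ := by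
  intro a ha
  obtain ⟨a', ha'_heavy, ha'_close⟩ := hrep a ha
  have herr_a' : err a' h ≤ 2 / p_l * β :=
    le_two_div_mul_of_average_le_of_frequent hk D (err · h) (fun x => (herr x h).1) hpl a'
      (hcount a' ha'_heavy) havg
  linarith [(abs_le.mp (ha'_close h)).2]

/-- Combining well-representation with an average error bound: if every
domain in the support of μ is δ-close in error (uniformly over the class H) to some
atom of μ-mass at least p_l, every such heavy atom appears at least k·p_l/2 times among
the realized domains D₁,…,D_k, and the average error of h over the realized domains is
at most β, then err_D(h) ≤ (2/p_l)·β + δ for every D in the support of μ. -/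
theorem well_representation_error_bound {α H : Type*} [MeasurableSpace α] [Fintype α]
    [DecidableEq α] [MeasurableSingletonClass α]
    (μ : Measure α) [IsProbabilityMeasure μ]
    (err : α → H → ℝ) (herr : ∀ a h, err a h ∈ Set.Icc (0 : ℝ) 1)
    (p_l δ β : ℝ) (hpl : 0 < p_l) (hpl1 : p_l < 1) (hδ : 0 ≤ δ) (hβ : 0 ≤ β)
    {k : ℕ} (hk : 0 < k) (D : Fin k → α)
    (hrep : ∀ a : α, μ {a} ≠ 0 →
      ∃ a' : α, ENNReal.ofReal p_l ≤ μ {a'} ∧ ∀ h : H, |err a h - err a' h| ≤ δ)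
    (hcount : ∀ a' : α, ENNReal.ofReal p_l ≤ μ {a'} →
      (k : ℝ) * p_l / 2 ≤ ((Finset.univ.filter (fun i : Fin k => D i = a')).card : ℝ))
    (h : H) (havg : (1 / k : ℝ) * ∑ i, err (D i) h ≤ β) :
    ∀ a : α, μ {a} ≠ 0 → err a h ≤ (2 / p_l) * β + δ :=
  well_representation_error_bound_general μ err herr p_l δ β hpl hk D hrep hcount h havg
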